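/- arXiv:1511.00537 — 7 statements merged into one kernel-verified Lean document; each statement's English description precedes it below -/
import Mathlib

section
/- If v is a vertex of minimum degree in a finite simple graph G, then R'(G) − R'(G − v) ≥ 0, where R'(G) = Σ_{uv∈E(G)} 1/max{d(u),d(v)}. -/
open Finset

variable {V : Type*} [Fintype V] [DecidableEq V]

/-- Modified Randić index `R'(G) = Σ_{uv∈E} 1/max(d(u),d(v))`. -/
noncomputable def Rprime (G : SimpleGraph V) [DecidableRel G.Adj] : ℝ :=
  ∑ e ∈ G.edgeFinset,
    Sym2.lift ⟨fun u v => 1 / max (G.degree u : ℝ) (G.degree v),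
      fun u v => by simp [max_comm]⟩ e

/-- Harmonic index `H(G) = Σ_{uv∈E} 2/(d(u)+d(v))`. -/
noncomputable def harmonicIndex (G : SimpleGraph V) [DecidableRel G.Adj] : ℝ :=
  ∑ e ∈ G.edgeFinset,
    Sym2.lift ⟨fun u v => 2 / ((G.degree u : ℝ) + (G.degree v)),
      fun u v => by simp [add_comm]⟩ e

/-- Randić index `R(G) = Σ_{uv∈E} 1/√(d(u)d(v))`. -/
noncomputable def randic (G : SimpleGraph V) [DecidableRel G.Adj] : ℝ :=
  ∑ e ∈ G.edgeFinset,
    Sym2.lift ⟨fun u v => 1 / Real.sqrt ((G.degree u : ℝ) * (G.degree v)),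
      fun u v => by simp [mul_comm]⟩ e

/-- Coloring number: least `k` such that some linear ordering of the vertices has
each vertex preceded by fewer than `k` of its neighbors. -/
noncomputable def coloringNumber (G : SimpleGraph V) : ℕ :=
  sInf {k | ∃ L : LinearOrder V, ∀ v, {u | G.Adj u v ∧ L.lt u v}.ncard < k}

/-- Degeneracy: max over (induced) subgraphs of the minimum degree. -/
def degeneracy (G : SimpleGraph V) [DecidableRel G.Adj] : ℕ :=
  Finset.univ.sup fun s : Finset V =>
    if h : s.Nonempty then s.inf' h fun v => (s.filter fun w => G.Adj v w).card else 0

/-- Achromatic number: largest `k` admitting a complete `k`-coloring. -/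
noncomputable def achromaticNumber (G : SimpleGraph V) : ℕ :=
  sSup {k | ∃ C : G.Coloring (Fin k),
    ∀ c₁ c₂ : Fin k, c₁ ≠ c₂ → ∃ u v, G.Adj u v ∧ C u = c₁ ∧ C v = c₂}

/-- List chromatic number. -/
noncomputable def listChromaticNumber (G : SimpleGraph V) : ℕ :=
  sInf {k | ∀ L : V → Finset ℕ, (∀ v, k ≤ (L v).card) →
    ∃ c : V → ℕ, (∀ v, c v ∈ L v) ∧ ∀ ⦃u v⦄, G.Adj u v → c u ≠ c v}

/-- The eigenvalues of the (real) adjacency matrix of `G`. -/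
noncomputable def adjEigenvalues (G : SimpleGraph V) [DecidableRel G.Adj] : V → ℝ :=
  Matrix.IsHermitian.eigenvalues (A := G.adjMatrix ℝ)
    (by rw [Matrix.IsHermitian, Matrix.conjTranspose_eq_transpose_of_trivial]
        exact SimpleGraph.isSymm_adjMatrix G)

/-- `s⁺`: the sum of squares of the positive adjacency eigenvalues. -/
noncomputable def sPlus (G : SimpleGraph V) [DecidableRel G.Adj] : ℝ :=
  ∑ i : V, if 0 < adjEigenvalues G i then (adjEigenvalues G i) ^ 2 else 0

/-- The largest adjacency eigenvalue `μ`. -/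
noncomputable def specRad (G : SimpleGraph V) [DecidableRel G.Adj] : ℝ :=
  ⨆ i, adjEigenvalues G i

/-- `K_k • K_{1,n-k}`: the clique `K_k` on the first `k` vertices of `Fin n`, with the
vertex `k-1` identified with the center of a star whose leaves are the remaining vertices.
For `k = 1` this is the star `K_{1,n-1}`. -/
def cliqueStar (n k : ℕ) : SimpleGraph (Fin n) where
  Adj u v := u ≠ v ∧ (((u : ℕ) < k ∧ (v : ℕ) < k) ∨
    ((u : ℕ) + 1 = k ∧ k ≤ (v : ℕ)) ∨ ((v : ℕ) + 1 = k ∧ k ≤ (u : ℕ)))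
  symm := ⟨by rintro u v ⟨h1, h2⟩; exact ⟨h1.symm, by tauto⟩⟩
  loopless := ⟨by rintro u ⟨h1, -⟩; exact h1 rfl⟩

instance (n k : ℕ) : DecidableRel (cliqueStar n k).Adj := fun u v => by
  unfold cliqueStar; simp only; infer_instance


instance instDecInduce (G : SimpleGraph V) [DecidableRel G.Adj] (s : Set V)
    [DecidablePred (· ∈ s)] : DecidableRel (G.induce s).Adj :=
  fun a b => inferInstanceAs (Decidable (G.Adj a b))


/-!
Deleting `v` removes the edges `uv` with `u ~ v`; since `v` has minimum degree, such an edge has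
weight `1 / d(u)`. It also lowers `d(u)` to `d'(u) = d(u) - 1` for these `u`. An edge `uw` of
`G - v` gains at most `(1/d'(u) - 1/d(u)) + (1/d'(w) - 1/d(w))`, so over all edges each vertex `u`
is charged `d'(u) (1/d'(u) - 1/d(u))`, which is at most `1/d(u)` if `u ~ v` and zero otherwise:
the lost edges pay for the gain.
-/

section

variable {K : Type*} [Field K] [LinearOrder K] [IsStrictOrderedRing K]

theorem one_div_max_sub_one_div_max_le {a a' b b' : K} (ha' : 0 < a') (ha : a' ≤ a)
    (hb' : 0 < b') (hb : b' ≤ b) :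
    1 / max a' b' - 1 / max a b ≤ (1 / a' - 1 / a) + (1 / b' - 1 / b) := by
  have hga : 0 ≤ 1 / a' - 1 / a := sub_nonneg.2 (one_div_le_one_div_of_le ha' ha)
  have hgb : 0 ≤ 1 / b' - 1 / b := sub_nonneg.2 (one_div_le_one_div_of_le hb' hb)
  rcases le_total b a with h | h
  · have := one_div_le_one_div_of_le ha' (le_max_left a' b')
    rw [max_eq_left h]
    linarith
  · have := one_div_le_one_div_of_le hb' (le_max_right a' b')
    rw [max_eq_right h]
    linarith

theorem mul_one_div_sub_one_div_le {a a' : K} (ha' : 0 ≤ a') (h : a' ≤ a) :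
    a' * (1 / a' - 1 / a) ≤ (a - a') / a := by
  rcases ha'.eq_or_lt with rfl | ha'
  · simpa using div_nonneg h h
  · have ha : a ≠ 0 := (ha'.trans_le h).ne'
    field_simp
    rfl

end

namespace SimpleGraph

variable (G : SimpleGraph V) [DecidableRel G.Adj] {M : Type*} [AddCommMonoid M]

theorem sum_dart_edge_eq_two_nsmul (F : Sym2 V → M) :
    ∑ d : G.Dart, F d.edge = 2 • ∑ e ∈ G.edgeFinset, F e := by
  rw [← sum_fiberwise_of_maps_to (g := Dart.edge) (t := G.edgeFinset) (by simp), smul_sum]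
  refine sum_congr rfl fun e he => ?_
  rw [sum_congr rfl fun d hd => by rw [(mem_filter.1 hd).2], sum_const,
    G.dart_edge_fiber_card e (mem_edgeFinset.1 he)]

theorem sum_sum_neighborFinset_eq_two_nsmul (F : Sym2 V → M) :
    ∑ u, ∑ w ∈ G.neighborFinset u, F s(u, w) = 2 • ∑ e ∈ G.edgeFinset, F e := by
  rw [← sum_dart_edge_eq_two_nsmul, ← sum_fiberwise univ fun d : G.Dart => d.fst]
  refine sum_congr rfl fun u _ => ?_
  rw [G.dart_fst_fiber u, sum_image fun _ _ _ _ h => G.dartOfNeighborSet_injective u h]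
  exact (sum_subtype _ (fun w => mem_neighborFinset G u w) (fun w => F s(u, w))).trans rfl

theorem map_neighborFinset_induce_ne (v : V) (a : {u | u ≠ v}) :
    ((G.induce {u | u ≠ v}).neighborFinset a).map (.subtype (· ∈ {u | u ≠ v})) =
      (G.neighborFinset a).erase v := by
  ext
  simp [and_comm]

theorem degree_induce_ne (v : V) (a : {u | u ≠ v}) :
    (G.induce {u | u ≠ v}).degree a = #((G.neighborFinset a).erase v) := by
  rw [← card_neighborFinset_eq_degree, ← card_map, map_neighborFinset_induce_ne]

theorem sum_sum_neighborFinset_induce_ne (v : V) (F : V → V → M) :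
    ∑ a, ∑ b ∈ (G.induce {u | u ≠ v}).neighborFinset a, F a b =
      ∑ u ∈ univ.erase v, ∑ w ∈ (G.neighborFinset u).erase v, F u w := by
  rw [sum_subtype (univ.erase v) (p := (· ∈ {u | u ≠ v})) (by simp)]
  refine sum_congr rfl fun a _ => ?_
  rw [← map_neighborFinset_induce_ne, sum_map]
  rfl

theorem sum_erase_ite_mem_neighborFinset (v : V) (f : V → M) :
    ∑ u ∈ univ.erase v, (if v ∈ G.neighborFinset u then f u else 0) =
      ∑ u ∈ G.neighborFinset v, f u := by
  rw [← sum_filter]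
  congr 1
  ext u
  simp only [mem_filter, mem_erase, mem_univ, mem_neighborFinset, and_true]
  exact ⟨fun h => h.2.symm, fun h => ⟨h.ne', h.symm⟩⟩

theorem sum_sum_neighborFinset_eq_sum_erase_add (v : V) (F : V → V → M) :
    ∑ u, ∑ w ∈ G.neighborFinset u, F u w =
      ∑ u ∈ univ.erase v, ∑ w ∈ (G.neighborFinset u).erase v, F u w +
        ∑ w ∈ G.neighborFinset v, (F v w + F w v) := by
  have hrow (u : V) : ∑ w ∈ G.neighborFinset u, F u w =
      ∑ w ∈ (G.neighborFinset u).erase v, F u w +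
        if v ∈ G.neighborFinset u then F u v else 0 := by
    by_cases h : v ∈ G.neighborFinset u
    · rw [if_pos h, sum_erase_add _ _ h]
    · rw [if_neg h, erase_eq_of_notMem h, add_zero]
  rw [← add_sum_erase univ _ (mem_univ v), sum_congr rfl fun u _ => hrow u, sum_add_distrib,
    sum_erase_ite_mem_neighborFinset, sum_add_distrib]
  abel

theorem sum_sum_erase_neighborFinset_add (v : V) (g : V → M) :
    ∑ u ∈ univ.erase v, ∑ w ∈ (G.neighborFinset u).erase v, (g u + g w) =
      2 • ∑ u ∈ univ.erase v, #((G.neighborFinset u).erase v) • g u := by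
  have hswap : ∑ u ∈ univ.erase v, ∑ w ∈ (G.neighborFinset u).erase v, g w =
      ∑ w ∈ univ.erase v, ∑ u ∈ (G.neighborFinset w).erase v, g w :=
    sum_comm' fun u w => by
      simp only [mem_erase, mem_univ, mem_neighborFinset, G.adj_comm u w]
      tauto
  simp only [sum_add_distrib, hswap, sum_const, two_nsmul]

theorem two_mul_rprime :
    2 * Rprime G =
      ∑ u, ∑ w ∈ G.neighborFinset u, 1 / max (G.degree u : ℝ) (G.degree w) := by
  rw [Rprime, two_mul, ← two_nsmul, ← sum_sum_neighborFinset_eq_two_nsmul]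
  rfl

theorem two_mul_rprime_induce_ne (v : V) :
    2 * Rprime (G.induce {u | u ≠ v}) =
      ∑ u ∈ univ.erase v, ∑ w ∈ (G.neighborFinset u).erase v,
        1 / max (#((G.neighborFinset u).erase v) : ℝ) #((G.neighborFinset w).erase v) := by
  rw [two_mul_rprime, ← sum_sum_neighborFinset_induce_ne]
  simp only [degree_induce_ne]

theorem two_mul_rprime_eq_sum_erase_add {v : V} (hv : G.degree v = G.minDegree) :
    2 * Rprime G =
      ∑ u ∈ univ.erase v, ∑ w ∈ (G.neighborFinset u).erase v,
        1 / max (G.degree u : ℝ) (G.degree w) +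
      2 * ∑ u ∈ G.neighborFinset v, 1 / (G.degree u : ℝ) := by
  have hmin (u : V) : (G.degree v : ℝ) ≤ G.degree u := by
    rw [hv]
    exact_mod_cast G.minDegree_le_degree u
  rw [two_mul_rprime, sum_sum_neighborFinset_eq_sum_erase_add _ v, mul_sum]
  simp only [max_eq_right (hmin _), max_eq_left (hmin _), two_mul]

theorem two_mul_rprime_induce_ne_le (v : V) :
    2 * Rprime (G.induce {u | u ≠ v}) ≤
      ∑ u ∈ univ.erase v, ∑ w ∈ (G.neighborFinset u).erase v,
        1 / max (G.degree u : ℝ) (G.degree w) +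
      2 * ∑ u ∈ univ.erase v, (#((G.neighborFinset u).erase v) : ℝ) *
        (1 / #((G.neighborFinset u).erase v) - 1 / G.degree u) := by
  set d : V → ℝ := fun u => G.degree u with hd
  set d' : V → ℝ := fun u => #((G.neighborFinset u).erase v) with hd'
  have hd'_le (u : V) : d' u ≤ d u := by
    simp only [hd, hd', ← card_neighborFinset_eq_degree]
    exact_mod_cast card_erase_le
  have hd'_pos {u w : V} (hw : w ∈ (G.neighborFinset u).erase v) : 0 < d' u := by
    simp only [hd']
    exact_mod_cast card_pos.2 ⟨w, hw⟩
  have hsymm {u w : V} (hu : u ∈ univ.erase v) (hw : w ∈ (G.neighborFinset u).erase v) :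
      u ∈ (G.neighborFinset w).erase v := by
    simp only [mem_erase, mem_neighborFinset] at hu hw ⊢
    exact ⟨hu.1, hw.2.symm⟩
  calc 2 * Rprime (G.induce {u | u ≠ v})
      = ∑ u ∈ univ.erase v, ∑ w ∈ (G.neighborFinset u).erase v, 1 / max (d' u) (d' w) :=
        two_mul_rprime_induce_ne G v
    _ ≤ ∑ u ∈ univ.erase v, ∑ w ∈ (G.neighborFinset u).erase v, (1 / max (d u) (d w) +
          ((1 / d' u - 1 / d u) + (1 / d' w - 1 / d w))) :=
        sum_le_sum fun u hu => sum_le_sum fun w hw => by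
          linarith [one_div_max_sub_one_div_max_le (hd'_pos hw) (hd'_le u)
            (hd'_pos (hsymm hu hw)) (hd'_le w)]
    _ = _ := by
      rw [sum_congr rfl fun u _ => sum_add_distrib, sum_add_distrib,
        sum_sum_erase_neighborFinset_add, two_nsmul, two_mul]
      simp only [nsmul_eq_mul, hd, hd']

theorem sum_card_erase_mul_sub_le (v : V) :
    ∑ u ∈ univ.erase v, (#((G.neighborFinset u).erase v) : ℝ) *
        (1 / #((G.neighborFinset u).erase v) - 1 / G.degree u) ≤
      ∑ u ∈ G.neighborFinset v, 1 / (G.degree u : ℝ) := by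
  rw [← sum_erase_ite_mem_neighborFinset]
  refine sum_le_sum fun u _ => ?_
  refine (mul_one_div_sub_one_div_le (Nat.cast_nonneg _)
    (Nat.cast_le.2 (card_erase_le.trans (card_neighborFinset_eq_degree G u).le))).trans_eq ?_
  rw [← card_neighborFinset_eq_degree]
  split_ifs with h
  · rw [cast_card_erase_of_mem h, sub_sub_cancel]
  · rw [erase_eq_of_notMem h, sub_self, zero_div]

end SimpleGraph

theorem rprime_deleteVertex_le (G : SimpleGraph V) [DecidableRel G.Adj] (v : V)
    (hv : G.degree v = G.minDegree) :
    0 ≤ Rprime G - Rprime (G.induce {u | u ≠ v}) := by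
  linarith [G.two_mul_rprime_eq_sum_erase_add hv, G.two_mul_rprime_induce_ne_le v,
    G.sum_card_erase_mul_sub_le v]
end

section
/- If T is a tree of order n ≥ 2, then R'(T) ≥ 1, with equality if and only if T is the star K_{1,n−1}. -/
open Finset

variable {V : Type*} [Fintype V] [DecidableEq V]

/-!
Every degree is at most `n - 1`, so each edge contributes at least `1 / (n - 1)` to `R'`, with
equality exactly when one of its endpoints is universal; a tree has `n - 1` edges, whence
`R'(T) ≥ 1`. A universal vertex of a tree already carries all `n - 1` edges, so the tree is the
star centered there.
-/

open SimpleGraph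

namespace SimpleGraph

theorem eq_starGraph_of_isUniversal {α : Type*} [Fintype α] [DecidableEq α] {G : SimpleGraph α}
    [DecidableRel G.Adj] (hE : #G.edgeFinset + 1 = Fintype.card α) {c : α}
    (hc : G.IsUniversal c) : G = starGraph c := by
  have hle : starGraph c ≤ G := fun u v huv => by
    obtain ⟨hne, rfl | rfl⟩ := starGraph_adj.1 huv
    exacts [hc hne, (hc hne.symm).symm]
  have hcard : #G.edgeFinset ≤ #(starGraph c).edgeFinset := by
    have := (isTree_starGraph c).card_edgeFinset
    omega
  exact (edgeFinset_inj.1 (eq_of_subset_of_card_le (edgeFinset_mono hle) hcard)).symm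

theorem forall_mem_edgeFinset_exists_isUniversal_iff {α : Type*} [Fintype α] [DecidableEq α]
    {G : SimpleGraph α} [DecidableRel G.Adj] (hE : #G.edgeFinset + 1 = Fintype.card α)
    (hα : 2 ≤ Fintype.card α) :
    (∀ e ∈ G.edgeFinset, ∃ v ∈ e, G.IsUniversal v) ↔ ∃ c, G = starGraph c := by
  constructor
  · intro h
    obtain ⟨e, he⟩ : G.edgeFinset.Nonempty := card_pos.1 (by omega)
    obtain ⟨c, -, hc⟩ := h e he
    exact ⟨c, eq_starGraph_of_isUniversal hE hc⟩
  · rintro ⟨c, rfl⟩ e he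
    induction e with
    | h u v =>
      obtain ⟨-, rfl | rfl⟩ := starGraph_adj.1 (mem_edgeFinset.1 he)
      exacts [⟨u, Sym2.mem_mk_left u v, isUniversal_starGraph_self⟩,
        ⟨v, Sym2.mem_mk_right u v, isUniversal_starGraph_self⟩]

theorem nonempty_iso_starGraph_iff {α β : Type*} [Fintype α] [Fintype β]
    (h : Fintype.card α = Fintype.card β) (G : SimpleGraph α) (r : β) :
    Nonempty (G ≃g starGraph r) ↔ ∃ c, G = starGraph c := by
  constructor
  · rintro ⟨f⟩
    refine ⟨f.symm r, SimpleGraph.ext <| funext₂ fun u v => propext ?_⟩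
    rw [← f.map_rel_iff, starGraph_adj, starGraph_adj, f.injective.ne_iff, f.eq_symm_apply,
      f.eq_symm_apply]
  · rintro ⟨c, rfl⟩
    classical
    let e := (Fintype.equivOfCardEq h).trans (Equiv.swap (Fintype.equivOfCardEq h c) r)
    have hc : e c = r := by simp [e]
    exact ⟨hc ▸ ⟨e, by simp [e.injective.ne_iff, e.injective.eq_iff]⟩⟩

end SimpleGraph

theorem cliqueStar_one_eq_starGraph {n : ℕ} (hn : 0 < n) :
    cliqueStar n 1 = starGraph ⟨0, hn⟩ := by
  ext u v
  simp only [cliqueStar, starGraph_adj, Fin.ext_iff, ne_eq]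
  omega

section RprimeBound

variable {α : Type*} [Fintype α] (G : SimpleGraph α) [DecidableRel G.Adj]

noncomputable def rprimeWeight : Sym2 α → ℝ :=
  Sym2.lift ⟨fun u v => 1 / max (G.degree u : ℝ) (G.degree v), fun u v => by simp [max_comm]⟩

theorem Rprime_eq_sum_rprimeWeight : Rprime G = ∑ e ∈ G.edgeFinset, rprimeWeight G e := rfl

theorem rprimeWeight_mk (u v : α) :
    rprimeWeight G s(u, v) = 1 / (max (G.degree u) (G.degree v) : ℕ) := by
  simp [rprimeWeight]

variable {G}

theorem one_div_card_sub_one_le_rprimeWeight {e : Sym2 α} (he : e ∈ G.edgeFinset) :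
    1 / ((Fintype.card α - 1 : ℕ) : ℝ) ≤ rprimeWeight G e := by
  induction e with
  | h u v =>
    have hpos : 0 < max (G.degree u) (G.degree v) :=
      lt_max_of_lt_left ((G.degree_pos_iff_exists_adj u).2 ⟨v, mem_edgeFinset.1 he⟩)
    have hle : max (G.degree u) (G.degree v) ≤ Fintype.card α - 1 :=
      max_le (Nat.le_sub_one_of_lt (G.degree_lt_card_verts u))
        (Nat.le_sub_one_of_lt (G.degree_lt_card_verts v))
    rw [rprimeWeight_mk]
    exact one_div_le_one_div_of_le (by exact_mod_cast hpos) (by exact_mod_cast hle)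

theorem rprimeWeight_eq_one_div_card_sub_one_iff (e : Sym2 α) :
    rprimeWeight G e = 1 / ((Fintype.card α - 1 : ℕ) : ℝ) ↔ ∃ v ∈ e, G.IsUniversal v := by
  induction e with
  | h u v =>
    have hu := Nat.le_sub_one_of_lt (G.degree_lt_card_verts u)
    have hv := Nat.le_sub_one_of_lt (G.degree_lt_card_verts v)
    have hmem : (∃ w ∈ s(u, v), G.IsUniversal w) ↔ G.IsUniversal u ∨ G.IsUniversal v := by
      simp only [Sym2.mem_iff, or_and_right, exists_or, exists_eq_left]
    rw [rprimeWeight_mk, one_div, one_div, inv_inj, Nat.cast_inj, hmem,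
      ← degree_eq_card_sub_one, ← degree_eq_card_sub_one]
    omega

theorem card_edgeFinset_div_eq_sum :
    (#G.edgeFinset : ℝ) / ((Fintype.card α - 1 : ℕ) : ℝ) =
      ∑ _e ∈ G.edgeFinset, 1 / ((Fintype.card α - 1 : ℕ) : ℝ) := by
  rw [sum_const, nsmul_eq_mul, mul_one_div]

theorem card_edgeFinset_div_le_Rprime :
    (#G.edgeFinset : ℝ) / ((Fintype.card α - 1 : ℕ) : ℝ) ≤ Rprime G := by
  rw [card_edgeFinset_div_eq_sum, Rprime_eq_sum_rprimeWeight]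
  exact sum_le_sum fun e he => one_div_card_sub_one_le_rprimeWeight he

theorem Rprime_eq_card_edgeFinset_div_iff :
    Rprime G = (#G.edgeFinset : ℝ) / ((Fintype.card α - 1 : ℕ) : ℝ) ↔
      ∀ e ∈ G.edgeFinset, ∃ v ∈ e, G.IsUniversal v := by
  rw [card_edgeFinset_div_eq_sum, Rprime_eq_sum_rprimeWeight, eq_comm,
    sum_eq_sum_iff_of_le fun e he => one_div_card_sub_one_le_rprimeWeight he]
  exact forall₂_congr fun e _ => eq_comm.trans (rprimeWeight_eq_one_div_card_sub_one_iff e)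

end RprimeBound

theorem tree_rprime (G : SimpleGraph V) [DecidableRel G.Adj]
    (hn : 2 ≤ Fintype.card V) (hT : G.IsTree) :
    1 ≤ Rprime G ∧
      (Rprime G = 1 ↔ Nonempty (G ≃g cliqueStar (Fintype.card V) 1)) := by
  have hE := hT.card_edgeFinset
  have hratio : (#G.edgeFinset : ℝ) / ((Fintype.card V - 1 : ℕ) : ℝ) = 1 := by
    rw [show #G.edgeFinset = Fintype.card V - 1 by omega]
    exact div_self (by exact_mod_cast (by omega : Fintype.card V - 1 ≠ 0))
  refine ⟨hratio ▸ card_edgeFinset_div_le_Rprime, ?_⟩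
  rw [← hratio, Rprime_eq_card_edgeFinset_div_iff,
    forall_mem_edgeFinset_exists_isUniversal_iff hE hn, cliqueStar_one_eq_starGraph (by omega)]
  exact (nonempty_iso_starGraph_iff (Fintype.card_fin _).symm G _).symm
end

section
/- For any graph G without isolated vertices, the chromatic number satisfies χ(G) ≤ 2R'(G), where R'(G) = Σ_{uv∈E} 1/max{d(u),d(v)}. -/
open Finset

variable {V : Type*} [Fintype V] [DecidableEq V]

/-!
Order the vertices by non-increasing degree. If fewer than `t` vertices have degree at least `t`,
then every vertex has fewer than `t` earlier neighbours and the greedy colouring uses at most `t`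
colours; so for `t = χ(G) - 1` the first `t` vertices all have degree at least `t`. Orienting each
edge from its earlier end, whose degree is the larger one, gives `R'(G) = Σ_u f(u) / d(u)`, where
`f(u)` counts the later neighbours of `u`. The `i`-th vertex has at most `i` earlier neighbours, so
for `i < t` its term is at least `1 - i / t`, and these lower bounds add up to `(t + 1) / 2`.
-/

theorem Fintype.exists_equivFin_antitone {ι α : Type*} [Fintype ι] [LinearOrder α] (f : ι → α) :
    ∃ e : ι ≃ Fin (Fintype.card ι), ∀ u v, e u ≤ e v → f v ≤ f u := by
  let σ := Fintype.equivFin ι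
  let g : Fin (Fintype.card ι) → αᵒᵈ := fun i => OrderDual.toDual (f (σ.symm i))
  refine ⟨σ.trans (Tuple.sort g).symm, fun u v huv => ?_⟩
  simpa [g] using Tuple.monotone_sort g huv

theorem Fin.card_filter_lt_le_of_injective {ι : Type*} [Fintype ι] {n : ℕ} {e : ι → Fin n}
    (he : Function.Injective e) (u : ι) : #{v | e v < e u} ≤ e u :=
  calc #{v | e v < e u} ≤ #(Iio (e u)) :=
        card_le_card_of_injOn e (fun v hv => by simpa using hv) he.injOn
    _ = e u := Fin.card_Iio _

theorem sum_range_one_sub_div {t : ℕ} (ht : 0 < t) :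
    ∑ i ∈ range t, (1 - (i : ℝ) / t) = (t + 1) / 2 := by
  have hgauss := congrArg (Nat.cast : ℕ → ℝ) (sum_range_id_mul_two t)
  push_cast [Nat.cast_sub ht] at hgauss
  rw [sum_sub_distrib, ← sum_div, sum_const, card_range, nsmul_one]
  field_simp
  linarith

section

variable {V : Type*} [Fintype V] (G : SimpleGraph V) [DecidableRel G.Adj]

namespace SimpleGraph

theorem colorable_of_card_earlier_neighbors_lt [DecidableEq V] {α : Type*} [LinearOrder α]
    {t : ℕ} (r : V → α) (hr : Function.Injective r)
    (h : ∀ v, #{u ∈ G.neighborFinset v | r u < r v} < t) : G.Colorable t := by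
  suffices ∀ s : Finset V, ∃ c : V → Fin t, ∀ u ∈ s, ∀ v ∈ s, G.Adj u v → c u ≠ c v by
    obtain ⟨c, hc⟩ := this univ
    exact ⟨Coloring.mk c fun huv => hc _ (mem_univ _) _ (mem_univ _) huv⟩
  intro s
  induction s using Finset.induction_on_max_value r with
  | empty => exact ⟨fun v => ⟨0, (Nat.zero_le _).trans_lt (h v)⟩, by simp⟩
  | insert a s ha hmax ih =>
    obtain ⟨c, hc⟩ := ih
    have hused : #((G.neighborFinset a ∩ s).image c) < #(univ : Finset (Fin t)) := by
      have hsub : G.neighborFinset a ∩ s ⊆ {u ∈ G.neighborFinset a | r u < r a} := fun u hu => by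
        obtain ⟨hua, hus⟩ := mem_inter.mp hu
        exact mem_filter.mpr ⟨hua, (hmax u hus).lt_of_ne (hr.ne fun hEq => ha (hEq ▸ hus))⟩
      simpa using card_image_le.trans_lt ((card_le_card hsub).trans_lt (h a))
    obtain ⟨col, -, hcol⟩ := exists_mem_notMem_of_card_lt_card hused
    have hold : ∀ w ∈ s, Function.update c a col w = c w := fun w hw =>
      Function.update_of_ne (ne_of_mem_of_not_mem hw ha) _ _
    have hfresh : ∀ w ∈ s, G.Adj a w → col ≠ c w := fun w hw haw hEq =>
      hcol (mem_image.mpr ⟨w, mem_inter.mpr ⟨(G.mem_neighborFinset a w).mpr haw, hw⟩, hEq.symm⟩)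
    refine ⟨Function.update c a col, fun u hu v hv huv => ?_⟩
    rcases mem_insert.mp hu with rfl | hus <;> rcases mem_insert.mp hv with rfl | hvs
    · exact absurd huv G.irrefl
    · simpa [hold v hvs] using hfresh v hvs huv
    · simpa [hold u hus] using (hfresh u hus huv.symm).symm
    · simpa [hold u hus, hold v hvs] using hc u hus v hvs huv

theorem colorable_of_card_high_degree_lt [DecidableEq V] {t : ℕ}
    (h : #{v | t ≤ G.degree v} < t) : G.Colorable t := by
  obtain ⟨e, he⟩ := Fintype.exists_equivFin_antitone fun v => G.degree v
  refine G.colorable_of_card_earlier_neighbors_lt e e.injective fun v => ?_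
  by_cases hv : G.degree v < t
  · exact (card_filter_le _ _).trans_lt (by rwa [card_neighborFinset_eq_degree])
  · refine (card_le_card fun u hu => ?_).trans_lt h
    rw [mem_filter] at hu
    simpa using (not_lt.mp hv).trans (he u v hu.2.le)

theorem sum_edgeFinset_eq_sum_sum_lt {α M : Type*} [LinearOrder α] [AddCommMonoid M]
    (r : V → α) (hr : Function.Injective r) (f : Sym2 V → M) :
    ∑ e ∈ G.edgeFinset, f e = ∑ u, ∑ v ∈ G.neighborFinset u with r u < r v, f s(u, v) := by
  rw [sum_sigma']
  symm
  refine sum_bij (fun p _ => s(p.1, p.2)) ?_ ?_ ?_ ?_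
  · rintro ⟨u, v⟩ hp
    simp_all
  · rintro ⟨u, v⟩ hp ⟨u', v'⟩ hp' huv
    simp only [mem_sigma, mem_filter, mem_neighborFinset] at hp hp'
    rcases Sym2.eq_iff.mp huv with ⟨rfl, rfl⟩ | ⟨rfl, rfl⟩
    · rfl
    · exact absurd hp.2.2 hp'.2.2.asymm
  · intro e he
    induction e using Sym2.ind with
    | _ u v =>
      rw [mem_edgeFinset, mem_edgeSet] at he
      rcases (hr.ne he.ne).lt_or_gt with huv | hvu
      · exact ⟨⟨u, v⟩, by simp [he, huv], rfl⟩
      · exact ⟨⟨v, u⟩, by simp [he.symm, hvu], Sym2.eq_swap⟩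
  · intro _ _
    rfl

theorem degree_le_card_later_neighbors_add {n : ℕ} {e : V → Fin n} (he : Function.Injective e)
    (u : V) : G.degree u ≤ #{v ∈ G.neighborFinset u | e u < e v} + e u := by
  rw [← card_neighborFinset_eq_degree,
    ← card_filter_add_card_filter_not (s := G.neighborFinset u) (fun v => e u < e v)]
  gcongr
  refine (card_le_card fun v hv => ?_).trans (Fin.card_filter_lt_le_of_injective he u)
  rw [mem_filter, mem_neighborFinset, not_lt] at hv
  exact mem_filter.mpr ⟨mem_univ _, hv.2.lt_of_ne (he.ne hv.1.ne')⟩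

theorem le_degree_of_lt_card_high_degree {t n : ℕ} {e : V → Fin n} (he : Function.Injective e)
    (hanti : ∀ u v, e u ≤ e v → G.degree v ≤ G.degree u) (hS : t ≤ #{v | t ≤ G.degree v})
    {u : V} (hu : (e u : ℕ) < t) : t ≤ G.degree u := by
  by_contra! hdeg
  have hsub : #{v | t ≤ G.degree v} ≤ e u := by
    refine (card_le_card fun v hv => ?_).trans (Fin.card_filter_lt_le_of_injective he u)
    rw [mem_filter] at hv ⊢
    exact ⟨mem_univ _, lt_of_not_ge fun huv => by linarith [hanti u v huv]⟩
  omega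

end SimpleGraph

theorem Rprime_eq_sum_div_degree {α : Type*} [LinearOrder α] (r : V → α)
    (hr : Function.Injective r) (hanti : ∀ u v, r u < r v → G.degree v ≤ G.degree u) :
    Rprime G = ∑ u, (#{v ∈ G.neighborFinset u | r u < r v} : ℝ) / G.degree u := by
  rw [Rprime, G.sum_edgeFinset_eq_sum_sum_lt r hr]
  refine sum_congr rfl fun u _ => ?_
  rw [div_eq_mul_one_div, ← nsmul_eq_mul, ← sum_const]
  refine sum_congr rfl fun v hv => ?_
  simp only [Sym2.lift_mk]
  rw [max_eq_left (by exact_mod_cast hanti u v (mem_filter.mp hv).2)]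

theorem add_one_le_two_mul_Rprime_of_not_colorable [DecidableEq V] {t : ℕ} (ht : 0 < t)
    (hcol : ¬ G.Colorable t) : (t + 1 : ℝ) ≤ 2 * Rprime G := by
  have hS : t ≤ #{v | t ≤ G.degree v} := not_lt.mp (mt G.colorable_of_card_high_degree_lt hcol)
  obtain ⟨e, hanti⟩ := Fintype.exists_equivFin_antitone fun v => G.degree v
  set g : V → ℝ := fun u => (#{v ∈ G.neighborFinset u | e u < e v} : ℝ) / G.degree u
  have hfirst : ∀ u, (e u : ℕ) < t → 1 - ((e u : ℕ) : ℝ) / t ≤ g u := by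
    intro u hu
    have htd : (t : ℝ) ≤ G.degree u := by
      exact_mod_cast G.le_degree_of_lt_card_high_degree e.injective hanti hS hu
    have hback : (G.degree u : ℝ) ≤ #{v ∈ G.neighborFinset u | e u < e v} + ((e u : ℕ) : ℝ) := by
      exact_mod_cast G.degree_le_card_later_neighbors_add e.injective u
    have hdpos : (0 : ℝ) < G.degree u := (Nat.cast_pos.mpr ht).trans_le htd
    calc 1 - ((e u : ℕ) : ℝ) / t ≤ 1 - ((e u : ℕ) : ℝ) / G.degree u := by gcongr
      _ = (G.degree u - ((e u : ℕ) : ℝ)) / G.degree u := by field_simp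
      _ ≤ g u := div_le_div_of_nonneg_right (by linarith) hdpos.le
  have hreindex : ∑ u with (e u : ℕ) < t, (1 - ((e u : ℕ) : ℝ) / t)
      = ∑ i ∈ range t, (1 - (i : ℝ) / t) := by
    refine sum_nbij (fun u => (e u : ℕ)) (fun u hu => ?_) ?_ (fun i hi => ?_) fun _ _ => rfl
    · simpa using hu
    · exact fun u _ v _ huv => e.injective (Fin.ext huv)
    · have hit : i < Fintype.card V := (mem_range.mp hi).trans_le (hS.trans (card_le_univ _))
      exact ⟨e.symm ⟨i, hit⟩, by simpa using hi, by simp⟩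
  calc (t + 1 : ℝ) = 2 * ∑ i ∈ range t, (1 - (i : ℝ) / t) := by
        rw [sum_range_one_sub_div ht]; ring
    _ = 2 * ∑ u with (e u : ℕ) < t, (1 - ((e u : ℕ) : ℝ) / t) := by rw [hreindex]
    _ ≤ 2 * ∑ u with (e u : ℕ) < t, g u := by
        gcongr with u hu
        exact hfirst u (mem_filter.mp hu).2
    _ ≤ 2 * ∑ u, g u := by
        gcongr
        exact filter_subset _ _
    _ = 2 * Rprime G := by
        rw [Rprime_eq_sum_div_degree G e e.injective fun u v h => hanti u v h.le]

end

theorem chromatic_le_two_rprime (G : SimpleGraph V) [DecidableRel G.Adj]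
    (h : ∀ v, 0 < G.degree v) :
    (G.chromaticNumber.toNat : ℝ) ≤ 2 * Rprime G := by
  obtain ⟨k, hk⟩ := ENat.ne_top_iff_exists.mp
    (G.chromaticNumber_ne_top_iff_exists.mpr ⟨_, G.colorable_of_fintype⟩)
  rw [← hk, ENat.toNat_natCast]
  cases isEmpty_or_nonempty V with
  | inl _ =>
    rw [G.chromaticNumber_eq_zero_of_isEmpty, Nat.cast_eq_zero] at hk
    simp [hk, Rprime, eq_empty_of_isEmpty G.edgeFinset]
  | inr hV =>
    obtain ⟨v⟩ := hV
    obtain ⟨w, hvw⟩ := (G.degree_pos_iff_exists_adj v).mp (h v)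
    have hk2 : 2 ≤ k := by exact_mod_cast hk ▸ G.two_le_chromaticNumber_of_adj hvw
    have hnc : ¬ G.Colorable (k - 1) := by
      rw [← SimpleGraph.chromaticNumber_le_iff_colorable, ← hk, Nat.cast_le]
      omega
    have := add_one_le_two_mul_Rprime_of_not_colorable G (by omega) hnc
    rwa [Nat.cast_sub (by omega), Nat.cast_one, sub_add_cancel] at this
end

section
/- For any graph G without isolated vertices, the list chromatic number satisfies χ_l(G) ≤ 2R'(G), where R'(G) = Σ_{uv∈E} 1/max{d(u),d(v)}. -/
open Finset

variable {V : Type*} [Fintype V] [DecidableEq V]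

/-!
Let `T` be a set of vertices such that the vertices in `T` have degree at least `|T| - 1` and
those outside `T` have degree at most `|T| - 1`. Colouring greedily from the lists, the vertices
of `T` first, shows `χ_l(G) ≤ |T|`. For `R'(G)`, add the vertices of `T` one at a time in order
of decreasing degree: when the `j`-th vertex `a` is added, at least `d(a) - j` edges at `a` lead
to vertices not added yet, whose degree is at most `d(a)`, so each of these edges has weight
`1 / d(a)`. As `d(a) ≥ |T| - 1`, the edges meeting `T` carry weight at least
`∑_{j < |T|} (1 - j / (|T| - 1)) = |T| / 2`.
-/

theorem exists_finset_forall_card_le_and_forall_le_card {α : Type*} [Fintype α] [DecidableEq α]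
    (f : α → ℕ) : ∃ s : Finset α, (∀ a ∈ s, #s ≤ f a) ∧ ∀ a ∉ s, f a ≤ #s := by
  set P : ℕ → Prop := fun k => k ≤ #{a | k ≤ f a}
  set k := Nat.findGreatest P (Fintype.card α)
  have hk : P k := Nat.findGreatest_spec (Nat.zero_le _) (Nat.zero_le _)
  have hk_succ : #{a | k + 1 ≤ f a} ≤ k := by
    by_cases hle : k + 1 ≤ Fintype.card α
    · have := Nat.findGreatest_is_greatest (P := P) (Nat.lt_add_one k) hle
      simp only [P, not_le] at this
      omega
    · have := card_le_univ ({a | k + 1 ≤ f a} : Finset α)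
      omega
  have hsub : ({a | k + 1 ≤ f a} : Finset α) ⊆ ({a | k ≤ f a} : Finset α) :=
    monotone_filter_right _ fun _ _ h => (Nat.le_succ k).trans h
  obtain ⟨s, hlo, hhi, hcard⟩ := exists_subsuperset_card_eq hsub hk_succ hk
  refine ⟨s, fun a ha => ?_, fun a ha => ?_⟩
  · simpa [hcard] using hhi ha
  · have : a ∉ ({a | k + 1 ≤ f a} : Finset α) := fun h => ha (hlo h)
    simp only [mem_filter, mem_univ, true_and, not_le] at this
    omega

namespace SimpleGraph

variable (G : SimpleGraph V) [DecidableRel G.Adj]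

theorem exists_listColoring_of_forall_card_lt {β α : Type*} [LinearOrder β] [DecidableEq α]
    (f : V → β) (L : V → Finset α) (hL : ∀ v, #{u ∈ G.neighborFinset v | f u ≤ f v} < #(L v)) :
    ∃ c : V → α, (∀ v, c v ∈ L v) ∧ ∀ ⦃u v⦄, G.Adj u v → c u ≠ c v := by
  suffices ∀ s : Finset V, ∃ c : V → α, (∀ v, c v ∈ L v) ∧
      ∀ u ∈ s, ∀ v ∈ s, G.Adj u v → c u ≠ c v by
    obtain ⟨c, hcL, hc⟩ := this univ
    exact ⟨c, hcL, fun u v huv => hc u (mem_univ u) v (mem_univ v) huv⟩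
  intro s
  induction s using Finset.induction_on_max_value f with
  | empty =>
    have hne v : (L v).Nonempty := card_pos.mp ((Nat.zero_le _).trans_lt (hL v))
    exact ⟨fun v => (hne v).choose, fun v => (hne v).choose_spec, by simp⟩
  | insert a s ha hmax ih =>
    obtain ⟨c, hcL, hc⟩ := ih
    have hforbidden : #((G.neighborFinset a ∩ s).image c) < #(L a) := by
      refine card_image_le.trans_lt (lt_of_le_of_lt (card_le_card fun u hu => ?_) (hL a))
      obtain ⟨hua, hus⟩ := mem_inter.mp hu
      exact mem_filter.mpr ⟨hua, hmax u hus⟩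
    obtain ⟨col, hcol, hfree⟩ := exists_mem_notMem_of_card_lt_card hforbidden
    have hne : ∀ v ∈ s, G.Adj a v → col ≠ c v := fun v hv hav h =>
      hfree (mem_image.mpr ⟨v, mem_inter.mpr ⟨(G.mem_neighborFinset a v).mpr hav, hv⟩, h.symm⟩)
    refine ⟨Function.update c a col, fun v => ?_, ?_⟩
    · rcases eq_or_ne v a with rfl | hva
      · simpa using hcol
      · simpa [hva] using hcL v
    · intro u hu v hv huv
      have hsa : ∀ w ∈ s, w ≠ a := fun w hw h => ha (h ▸ hw)
      rcases mem_insert.mp hu with rfl | hus <;> rcases mem_insert.mp hv with rfl | hvs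
      · exact absurd huv (G.irrefl)
      · simpa [hsa v hvs] using hne v hvs huv
      · simpa [hsa u hus] using (hne u hus huv.symm).symm
      · simpa [hsa u hus, hsa v hvs] using hc u hus v hvs huv

theorem listChromaticNumber_le_of_forall_notMem_degree_lt {T : Finset V} {k : ℕ} (hT : #T ≤ k)
    (hdeg : ∀ v ∉ T, G.degree v < k) : listChromaticNumber G ≤ k := by
  -- `False < True` in `Prop`, so this order colours `T` first.
  refine Nat.sInf_le fun L hL => G.exists_listColoring_of_forall_card_lt (fun v => v ∉ T) L
    fun v => lt_of_lt_of_le ?_ (hL v)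
  by_cases hv : v ∈ T
  · refine lt_of_le_of_lt (card_le_card fun u hu => ?_) ((card_erase_lt_of_mem hv).trans_le hT)
    obtain ⟨hadj, hle⟩ := mem_filter.mp hu
    have hu : u ∈ T := by simpa [hv] using hle
    exact mem_erase.mpr ⟨(G.ne_of_adj ((G.mem_neighborFinset v u).mp hadj)).symm, hu⟩
  · exact (card_filter_le _ _).trans_lt (by simpa using hdeg v hv)

noncomputable def rprimeWeight : Sym2 V → ℝ :=
  Sym2.lift ⟨fun u v => 1 / max (G.degree u : ℝ) (G.degree v), fun u v => by simp [max_comm]⟩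

noncomputable def rprimeOn (s : Finset V) : ℝ :=
  ∑ e ∈ s.biUnion (G.incidenceFinset ·), G.rprimeWeight e

omit [DecidableEq V] in
theorem rprimeWeight_nonneg (e : Sym2 V) : 0 ≤ G.rprimeWeight e := by
  induction e using Sym2.ind with
  | h u v => simp only [rprimeWeight, Sym2.lift_mk]; positivity

theorem rprimeOn_le_rprime (s : Finset V) : G.rprimeOn s ≤ Rprime G :=
  sum_le_sum_of_subset_of_nonneg (biUnion_subset.mpr fun _ _ => G.incidenceFinset_subset _)
    fun e _ _ => G.rprimeWeight_nonneg e

theorem rprimeOn_add_card_sdiff_div_le {a : V} {s : Finset V} (ha : a ∉ s)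
    (hdeg : ∀ u ∉ insert a s, G.degree u ≤ G.degree a) :
    G.rprimeOn s + #(G.neighborFinset a \ s) / (G.degree a : ℝ) ≤ G.rprimeOn (insert a s) := by
  set new := (G.neighborFinset a \ s).image fun u => s(a, u)
  have hdisj : Disjoint (s.biUnion (G.incidenceFinset ·)) new := by
    refine Finset.disjoint_left.mpr fun e he hnew => ?_
    obtain ⟨x, hx, hxe⟩ := mem_biUnion.mp he
    obtain ⟨u, hu, rfl⟩ := mem_image.mp hnew
    rcases Sym2.mem_iff.mp ((G.mem_incidenceFinset x _).mp hxe).2 with rfl | rfl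
    exacts [ha hx, (mem_sdiff.mp hu).2 hx]
  have hsub :
      s.biUnion (G.incidenceFinset ·) ∪ new ⊆ (insert a s).biUnion (G.incidenceFinset ·) := by
    rw [biUnion_insert, union_comm]
    refine union_subset_union_left fun e he => ?_
    obtain ⟨u, hu, rfl⟩ := mem_image.mp he
    simpa [mk'_mem_incidenceSet_left_iff] using (mem_sdiff.mp hu).1
  have hnew : ∑ e ∈ new, G.rprimeWeight e = #(G.neighborFinset a \ s) / (G.degree a : ℝ) := by
    rw [sum_image fun u _ v _ h => Sym2.congr_right.mp h, div_eq_mul_one_div, ← nsmul_eq_mul,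
      ← sum_const]
    refine sum_congr rfl fun u hu => ?_
    obtain ⟨hadj, hus⟩ := mem_sdiff.mp hu
    have hua : u ≠ a := (G.ne_of_adj ((G.mem_neighborFinset a u).mp hadj)).symm
    have : (G.degree u : ℝ) ≤ G.degree a := by
      exact_mod_cast hdeg u (by simp [hua, hus])
    simp only [rprimeWeight, Sym2.lift_mk, max_eq_left this]
  calc G.rprimeOn s + #(G.neighborFinset a \ s) / (G.degree a : ℝ)
      = ∑ e ∈ s.biUnion (G.incidenceFinset ·) ∪ new, G.rprimeWeight e := by
        rw [sum_union hdisj, hnew, rprimeOn]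
    _ ≤ G.rprimeOn (insert a s) :=
        sum_le_sum_of_subset_of_nonneg hsub fun e _ _ => G.rprimeWeight_nonneg e

/-- The left-hand side is `∑ j < #s, (1 - j / m)`. -/
theorem card_sub_le_rprimeOn {m : ℕ} {s : Finset V}
    (hup : ∀ x ∈ s, ∀ y ∉ s, G.degree y ≤ G.degree x) (hm : ∀ x ∈ s, m ≤ G.degree x)
    (hpos : ∀ x ∈ s, 0 < G.degree x) (hcard : #s ≤ m + 1) :
    (#s : ℝ) - #s * (#s - 1) / (2 * m) ≤ G.rprimeOn s := by
  induction s using Finset.induction_on_min_value (G.degree ·) with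
  | empty => simp [rprimeOn]
  | insert a s ha hmin ih =>
    have hup_s : ∀ x ∈ s, ∀ y ∉ s, G.degree y ≤ G.degree x := fun x hx y hy => by
      rcases eq_or_ne y a with rfl | hya
      · exact hmin x hx
      · exact hup x (mem_insert_of_mem hx) y (by simp [hya, hy])
    have hcard_s : #s ≤ m := by rw [card_insert_of_notMem ha] at hcard; omega
    have hda : (0 : ℝ) < G.degree a := by exact_mod_cast hpos a (mem_insert_self a s)
    have hma : (m : ℝ) ≤ G.degree a := by exact_mod_cast hm a (mem_insert_self a s)
    have hnbr : (G.degree a : ℝ) - #s ≤ #(G.neighborFinset a \ s) := by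
      have := card_le_card_sdiff_add_card (s := G.neighborFinset a) (t := s)
      rw [card_neighborFinset_eq_degree] at this
      rw [sub_le_iff_le_add]
      exact_mod_cast this
    have hfrac : (#s : ℝ) / G.degree a ≤ #s / m := by
      rcases Nat.eq_zero_or_pos #s with hs | hs
      · simp [hs]
      · have : (0 : ℝ) < m := by exact_mod_cast hs.trans_le hcard_s
        exact div_le_div_of_nonneg_left (Nat.cast_nonneg _) this hma
    have hgain : 1 - (#s : ℝ) / m ≤ #(G.neighborFinset a \ s) / (G.degree a : ℝ) :=
      calc 1 - (#s : ℝ) / m ≤ 1 - #s / G.degree a := by linarith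
        _ = (G.degree a - #s) / G.degree a := by field_simp
        _ ≤ #(G.neighborFinset a \ s) / (G.degree a : ℝ) := by gcongr
    have hstep := G.rprimeOn_add_card_sdiff_div_le ha (hup a (mem_insert_self a s))
    have hih := ih hup_s (fun x hx => hm x (mem_insert_of_mem hx))
      (fun x hx => hpos x (mem_insert_of_mem hx)) (by omega)
    rw [card_insert_of_notMem ha]
    push_cast
    linear_combination hih + hgain + hstep

theorem card_le_two_mul_rprime {T : Finset V} (hpos : ∀ v ∈ T, 0 < G.degree v)
    (hin : ∀ v ∈ T, #T ≤ G.degree v + 1) (hout : ∀ v ∉ T, G.degree v + 1 ≤ #T) :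
    (#T : ℝ) ≤ 2 * Rprime G := by
  have hkey := G.card_sub_le_rprimeOn (m := #T - 1)
    (fun x hx y hy => by have := hin x hx; have := hout y hy; omega)
    (fun x hx => by have := hin x hx; omega) hpos (by omega)
  have hhalf : (#T : ℝ) * (#T - 1) / (2 * (#T - 1 : ℕ)) ≤ #T / 2 := by
    rcases Nat.lt_or_ge #T 2 with hT | hT
    · have : #T - 1 = 0 := by omega
      simp only [this, CharP.cast_eq_zero, mul_zero, div_zero]
      positivity
    · have hm : (0 : ℝ) < (#T - 1 : ℕ) := by exact_mod_cast (by omega : 0 < #T - 1)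
      rw [Nat.cast_sub (by omega), Nat.cast_one] at hm ⊢
      exact (mul_div_mul_right _ _ hm.ne').le
  linarith [G.rprimeOn_le_rprime T]

end SimpleGraph

theorem listChromatic_le_two_rprime (G : SimpleGraph V) [DecidableRel G.Adj]
    (h : ∀ v, 0 < G.degree v) :
    (listChromaticNumber G : ℝ) ≤ 2 * Rprime G := by
  obtain ⟨T, hin, hout⟩ := exists_finset_forall_card_le_and_forall_le_card (G.degree · + 1)
  have hχ : listChromaticNumber G ≤ #T :=
    G.listChromaticNumber_le_of_forall_notMem_degree_lt le_rfl hout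
  calc (listChromaticNumber G : ℝ) ≤ #T := by exact_mod_cast hχ
    _ ≤ 2 * Rprime G := G.card_le_two_mul_rprime (fun v _ => h v) hin hout
end

section
/- For the graph K_k • K_{1,n−k} with 3 ≤ k ≤ n, obtained by identifying the center of the star K_{1,n−k} with a vertex of K_k, one has 2R'(K_k • K_{1,n−k}) = k. -/
open Finset

variable {V : Type*} [Fintype V] [DecidableEq V]

/-!
Counting every edge from both ends, `2 R'(G) = ∑ᵤ ∑_{v ~ u} 1 / max (d u) (d v)`.
In `K_k • K_{1,n-k}` the center is adjacent to all other vertices, so it has the largest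
degree `n - 1` and every edge at it has weight `1 / (n - 1)`. Hence the center collects `1`,
each of the `n - k` leaves `1 / (n - 1)`, and each of the other `k - 1` clique vertices
`1 / (n - 1) + (k - 2) / (k - 1)`, for a total of `1 + 1 + (k - 2) = k`.
-/

namespace SimpleGraph

variable {M : Type*} [AddCommMonoid M] (G : SimpleGraph V) [DecidableRel G.Adj]

theorem sum_darts_eq_two_nsmul_sum_edgeFinset (f : V → V → M) (hf : ∀ u v, f u v = f v u) :
    ∑ d : G.Dart, f d.fst d.snd = 2 • ∑ e ∈ G.edgeFinset, Sym2.lift ⟨f, hf⟩ e := by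
  rw [← sum_fiberwise_of_maps_to (g := Dart.edge) (t := G.edgeFinset) (by simp), smul_sum]
  refine sum_congr rfl fun e he => ?_
  induction e with
  | h u v =>
    let d : G.Dart := ⟨(u, v), mem_edgeFinset.mp he⟩
    rw [show ({d' : G.Dart | d'.edge = s(u, v)} : Finset _) = {d, d.symm} from d.edge_fiber,
      sum_pair d.symm_ne.symm]
    simp [d, hf u v, two_nsmul]

theorem sum_darts_eq_sum_sum_neighborFinset (f : V → V → M) :
    ∑ d : G.Dart, f d.fst d.snd = ∑ u, ∑ v ∈ G.neighborFinset u, f u v := by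
  rw [← sum_fiberwise univ fun d : G.Dart => d.fst]
  refine sum_congr rfl fun u _ => ?_
  rw [dart_fst_fiber, sum_image fun _ _ _ _ h => G.dartOfNeighborSet_injective u h]
  exact sum_set_coe (f := f u) _

end SimpleGraph

section Rprime

variable (G : SimpleGraph V) [DecidableRel G.Adj]

noncomputable def rprimeAt (u : V) : ℝ :=
  ∑ v ∈ G.neighborFinset u, 1 / max (G.degree u : ℝ) (G.degree v)

theorem two_mul_Rprime : 2 * Rprime G = ∑ u, rprimeAt G u := by
  rw [Rprime, two_mul, ← two_nsmul, ← G.sum_darts_eq_two_nsmul_sum_edgeFinset]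
  exact G.sum_darts_eq_sum_sum_neighborFinset fun u v => 1 / max (G.degree u : ℝ) (G.degree v)

end Rprime

theorem Finset.sum_range_ite_ite {M : Type*} [AddCommMonoid M] {n k : ℕ} (a b c : M)
    (hk : 0 < k) (hkn : k ≤ n) :
    ∑ m ∈ range n, (if m + 1 < k then a else if m + 1 = k then b else c) =
      (k - 1) • a + b + (n - k) • c := by
  obtain ⟨j, rfl⟩ : ∃ j, k = j + 1 := ⟨k - 1, by omega⟩
  have ha : ∀ m ∈ range j, (if m + 1 < j + 1 then a else if m + 1 = j + 1 then b else c) = a :=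
    fun m hm => if_pos (by simp at hm; omega)
  have hc : ∀ m ∈ Ico (j + 1) n,
      (if m + 1 < j + 1 then a else if m + 1 = j + 1 then b else c) = c :=
    fun m hm => by simp only [mem_Ico] at hm; rw [if_neg (by omega), if_neg (by omega)]
  rw [← sum_range_add_sum_Ico _ hkn, sum_range_succ, sum_congr rfl ha, sum_congr rfl hc,
    sum_const, sum_const, card_range, Nat.card_Ico, if_neg (lt_irrefl _), if_pos rfl,
    Nat.add_sub_cancel]

namespace SimpleGraph

variable {n k : ℕ} {h u v : Fin n}

theorem cliqueStar_adj_iff : (cliqueStar n k).Adj u v ↔ (u : ℕ) ≠ v ∧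
    ((u < k ∧ v < k) ∨ ((u : ℕ) + 1 = k ∧ k ≤ v) ∨ ((v : ℕ) + 1 = k ∧ k ≤ u)) := by
  simp [cliqueStar, Fin.ext_iff]

theorem neighborFinset_cliqueStar_center (hh : (h : ℕ) + 1 = k) :
    (cliqueStar n k).neighborFinset h = univ.erase h := by
  ext v
  simp only [mem_neighborFinset, cliqueStar_adj_iff, mem_erase, mem_univ, and_true, ne_eq,
    Fin.ext_iff]
  omega

theorem neighborFinset_cliqueStar_of_lt (hu : (u : ℕ) + 1 < k) :
    (cliqueStar n k).neighborFinset u = ({v | (v : ℕ) < k} : Finset (Fin n)).erase u := by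
  ext v
  simp only [mem_neighborFinset, cliqueStar_adj_iff, mem_erase, mem_filter, mem_univ, true_and,
    ne_eq, Fin.ext_iff]
  omega

theorem neighborFinset_cliqueStar_of_le (hh : (h : ℕ) + 1 = k) (hu : k ≤ u) :
    (cliqueStar n k).neighborFinset u = {h} := by
  ext v
  simp only [mem_neighborFinset, cliqueStar_adj_iff, mem_singleton, Fin.ext_iff]
  omega

theorem degree_cliqueStar_center (hh : (h : ℕ) + 1 = k) : (cliqueStar n k).degree h = n - 1 := by
  rw [← card_neighborFinset_eq_degree, neighborFinset_cliqueStar_center hh,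
    card_erase_of_mem (mem_univ h), card_univ, Fintype.card_fin]

theorem degree_cliqueStar_of_lt (hkn : k ≤ n) (hu : (u : ℕ) + 1 < k) :
    (cliqueStar n k).degree u = k - 1 := by
  rw [← card_neighborFinset_eq_degree, neighborFinset_cliqueStar_of_lt hu,
    card_erase_of_mem (by simp; omega), Fin.card_filter_val_lt, min_eq_right hkn]

theorem degree_cliqueStar_le_center (hh : (h : ℕ) + 1 = k) (v : Fin n) :
    (cliqueStar n k).degree v ≤ (cliqueStar n k).degree h := by
  have := (cliqueStar n k).degree_lt_card_verts v
  rw [Fintype.card_fin] at this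
  rw [degree_cliqueStar_center hh]
  omega

theorem max_degree_cliqueStar_center (hh : (h : ℕ) + 1 = k) (u : Fin n) :
    max ((cliqueStar n k).degree u : ℝ) ((cliqueStar n k).degree h) = n - 1 := by
  rw [max_eq_right (mod_cast degree_cliqueStar_le_center hh u), degree_cliqueStar_center hh,
    Nat.cast_pred h.pos]

end SimpleGraph

open SimpleGraph

section CliqueStar

variable {n k : ℕ} {h u : Fin n}

theorem rprimeAt_cliqueStar_center (hh : (h : ℕ) + 1 = k) (hn : 2 ≤ n) :
    rprimeAt (cliqueStar n k) h = 1 := by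
  have hn' : (n : ℝ) - 1 ≠ 0 := by
    rw [sub_ne_zero]; exact_mod_cast (by omega : n ≠ 1)
  rw [rprimeAt, neighborFinset_cliqueStar_center hh]
  simp_rw [max_comm ((cliqueStar n k).degree h : ℝ), max_degree_cliqueStar_center hh]
  rw [sum_const, card_erase_of_mem (mem_univ h), card_univ, Fintype.card_fin, nsmul_eq_mul,
    Nat.cast_pred h.pos, mul_one_div_cancel hn']

theorem rprimeAt_cliqueStar_of_le (hh : (h : ℕ) + 1 = k) (hu : k ≤ u) :
    rprimeAt (cliqueStar n k) u = 1 / ((n : ℝ) - 1) := by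
  rw [rprimeAt, neighborFinset_cliqueStar_of_le hh hu, sum_singleton,
    max_degree_cliqueStar_center hh]

theorem rprimeAt_cliqueStar_of_lt (hh : (h : ℕ) + 1 = k) (hkn : k ≤ n) (hu : (u : ℕ) + 1 < k) :
    rprimeAt (cliqueStar n k) u = 1 / ((n : ℝ) - 1) + ((k : ℝ) - 2) / ((k : ℝ) - 1) := by
  have h_mem : h ∈ ({v | (v : ℕ) < k} : Finset (Fin n)).erase u := by
    simp only [mem_erase, mem_filter, mem_univ, true_and, ne_eq, Fin.ext_iff]; omega
  have h_rest : ∀ v ∈ (({v | (v : ℕ) < k} : Finset (Fin n)).erase u).erase h,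
      1 / max ((cliqueStar n k).degree u : ℝ) ((cliqueStar n k).degree v) = 1 / ((k : ℝ) - 1) := by
    intro v hv
    simp only [mem_erase, mem_filter, mem_univ, true_and, ne_eq, Fin.ext_iff] at hv
    rw [degree_cliqueStar_of_lt hkn hu, degree_cliqueStar_of_lt hkn (by omega), max_self,
      Nat.cast_pred (by omega)]
  rw [rprimeAt, neighborFinset_cliqueStar_of_lt hu, ← add_sum_erase _ _ h_mem,
    max_degree_cliqueStar_center hh, sum_congr rfl h_rest, sum_const,
    card_erase_of_mem h_mem, card_erase_of_mem (by simp; omega), Fin.card_filter_val_lt,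
    min_eq_right hkn, nsmul_eq_mul, Nat.cast_sub (by omega), Nat.cast_pred (by omega)]
  ring

theorem rprimeAt_cliqueStar (hk : 2 ≤ k) (hkn : k ≤ n) (u : Fin n) :
    rprimeAt (cliqueStar n k) u =
      if (u : ℕ) + 1 < k then 1 / ((n : ℝ) - 1) + ((k : ℝ) - 2) / ((k : ℝ) - 1)
      else if (u : ℕ) + 1 = k then 1 else 1 / ((n : ℝ) - 1) := by
  have hh : ((⟨k - 1, by omega⟩ : Fin n) : ℕ) + 1 = k := Nat.sub_add_cancel (by omega)
  split_ifs with hu hu'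
  · exact rprimeAt_cliqueStar_of_lt hh hkn hu
  · exact rprimeAt_cliqueStar_center hu' (by omega)
  · exact rprimeAt_cliqueStar_of_le hh (by omega)

end CliqueStar

theorem rprime_cliqueStar (n k : ℕ) (hk : 3 ≤ k) (hkn : k ≤ n) :
    2 * Rprime (cliqueStar n k) = k := by
  rw [two_mul_Rprime, Fintype.sum_congr _ _ (rprimeAt_cliqueStar (by omega) hkn),
    Fin.sum_univ_eq_sum_range (fun m => if m + 1 < k then _ else if m + 1 = k then 1 else _),
    sum_range_ite_ite _ _ _ (by omega) hkn, nsmul_eq_mul, nsmul_eq_mul,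
    Nat.cast_pred (by omega), Nat.cast_sub hkn]
  have hk' : (k : ℝ) - 1 ≠ 0 := by rw [sub_ne_zero]; exact_mod_cast (by omega : k ≠ 1)
  have hn' : (n : ℝ) - 1 ≠ 0 := by rw [sub_ne_zero]; exact_mod_cast (by omega : n ≠ 1)
  field_simp
  ring
end

section
/- For any graph G with m edges, the Randić index satisfies R(G) ≥ m/μ, where μ is the largest eigenvalue of the adjacency matrix of G. -/
open Finset

variable {V : Type*} [Fintype V] [DecidableEq V]

/-! Testing the adjacency matrix `A` on `x v = √(d v)` gives
`Σ_{uv∈E} √(d u d v) = xᵀAx / 2 ≤ μ xᵀx / 2 = μ m`, while Cauchy–Schwarz gives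
`m² ≤ (Σ_{uv∈E} √(d u d v)) · R(G)`. Edge sums are handled as half of the corresponding dart sums. -/

open Matrix

theorem Matrix.IsHermitian.dotProduct_mulVec_le_iSup_eigenvalues {n : Type*} [Fintype n]
    [DecidableEq n] {A : Matrix n n ℝ} (hA : A.IsHermitian) (x : n → ℝ) :
    x ⬝ᵥ A *ᵥ x ≤ (⨆ i, hA.eigenvalues i) * (x ⬝ᵥ x) := by
  set U : Matrix n n ℝ := (hA.eigenvectorUnitary : Matrix n n ℝ)
  have hU : U * Uᵀ = 1 := by
    simpa [U, star_eq_conjTranspose] using (mem_unitaryGroup_iff).mp hA.eigenvectorUnitary.2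
  set y := Uᵀ *ᵥ x
  have hspec : A = U * diagonal hA.eigenvalues * Uᵀ := by
    conv_lhs => rw [hA.spectral_theorem]
    simp [U, Unitary.conjStarAlgAut_apply, star_eq_conjTranspose]
  have hquad : x ⬝ᵥ A *ᵥ x = ∑ i, hA.eigenvalues i * y i ^ 2 := by
    calc x ⬝ᵥ A *ᵥ x = y ⬝ᵥ diagonal hA.eigenvalues *ᵥ y := by
          conv_lhs => rw [hspec]
          rw [← mulVec_mulVec, ← mulVec_mulVec, dotProduct_mulVec, ← mulVec_transpose]
      _ = ∑ i, hA.eigenvalues i * y i ^ 2 := by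
        simp only [dotProduct, mulVec_diagonal]
        exact sum_congr rfl fun i _ => by ring
  have hnorm : x ⬝ᵥ x = ∑ i, y i ^ 2 := by
    calc x ⬝ᵥ x = x ⬝ᵥ (U * Uᵀ) *ᵥ x := by rw [hU, one_mulVec]
      _ = ∑ i, y i ^ 2 := by
        rw [← mulVec_mulVec, dotProduct_mulVec, ← mulVec_transpose]
        simp [y, dotProduct, sq]
  rw [hquad, hnorm, mul_sum]
  gcongr with i
  exact le_ciSup (Set.finite_range _).bddAbove i

namespace SimpleGraph

variable {V : Type*} [Fintype V] (G : SimpleGraph V) [DecidableRel G.Adj]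

theorem sum_darts_edge [DecidableEq V] {M : Type*} [AddCommMonoid M] (f : Sym2 V → M) :
    ∑ d : G.Dart, f d.edge = 2 • ∑ e ∈ G.edgeFinset, f e := by
  rw [← sum_fiberwise_of_maps_to (g := Dart.edge) (t := G.edgeFinset)
    (fun d _ => mem_edgeFinset.2 d.edge_mem), smul_sum]
  refine sum_congr rfl fun e he => ?_
  rw [sum_congr rfl fun d hd => congrArg f (mem_filter.1 hd).2, sum_const,
    G.dart_edge_fiber_card e (mem_edgeFinset.1 he)]

theorem sum_darts_eq_sum_sum_ite {M : Type*} [AddCommMonoid M] (F : V → V → M) :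
    ∑ d : G.Dart, F d.fst d.snd = ∑ u, ∑ v, if G.Adj u v then F u v else 0 := by
  rw [← Fintype.sum_prod_type', ← sum_filter]
  exact sum_bij (fun d _ => d.toProd) (fun d _ => by simp [d.adj])
    (fun d _ d' _ h => Dart.ext _ _ h) (fun p hp => ⟨⟨p, (mem_filter.1 hp).2⟩, mem_univ _, rfl⟩)
    (fun _ _ => rfl)

theorem dotProduct_adjMatrix_mulVec {α : Type*} [NonAssocSemiring α] (x y : V → α) :
    x ⬝ᵥ G.adjMatrix α *ᵥ y = ∑ d : G.Dart, x d.fst * y d.snd := by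
  rw [dotProduct_mulVec_adjMatrix, sum_darts_eq_sum_sum_ite G fun u v => x u * y v]

end SimpleGraph

theorem Finset.card_sq_le_sum_mul_sum_inv {ι R : Type*} [Field R] [LinearOrder R]
    [IsStrictOrderedRing R] (s : Finset ι) {f : ι → R} (hf : ∀ i ∈ s, 0 < f i) :
    (#s : R) ^ 2 ≤ (∑ i ∈ s, f i) * ∑ i ∈ s, (f i)⁻¹ := by
  simpa using sum_sq_le_sum_mul_sum_of_sq_le_mul s (r := 1) (fun i hi => (hf i hi).le)
    (fun i hi => (inv_pos.2 (hf i hi)).le) (fun i hi => by simp [(hf i hi).ne'])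

theorem two_mul_randic_eq_sum_darts (G : SimpleGraph V) [DecidableRel G.Adj] :
    2 * randic G = ∑ d : G.Dart, (√((G.degree d.fst : ℝ) * G.degree d.snd))⁻¹ := by
  rw [randic, ← Nat.cast_ofNat, ← nsmul_eq_mul, ← G.sum_darts_edge]
  simp [SimpleGraph.Dart.edge]

theorem sum_darts_sqrt_degree_mul_le_specRad_mul (G : SimpleGraph V) [DecidableRel G.Adj] :
    ∑ d : G.Dart, √((G.degree d.fst : ℝ) * G.degree d.snd) ≤
      specRad G * Fintype.card G.Dart := by
  set x : V → ℝ := fun v => √(G.degree v : ℝ)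
  have hray : x ⬝ᵥ G.adjMatrix ℝ *ᵥ x ≤ specRad G * (x ⬝ᵥ x) :=
    (G.isHermitian_adjMatrix ℝ).dotProduct_mulVec_le_iSup_eigenvalues x
  have hxx : x ⬝ᵥ x = Fintype.card G.Dart := by
    rw [G.dart_card_eq_sum_degrees, Nat.cast_sum]
    exact sum_congr rfl fun v _ => Real.mul_self_sqrt (Nat.cast_nonneg _)
  rw [G.dotProduct_adjMatrix_mulVec, hxx] at hray
  convert hray using 2 with d
  exact Real.sqrt_mul (Nat.cast_nonneg _) _

theorem randic_ge_m_div_mu (G : SimpleGraph V) [DecidableRel G.Adj] :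
    (G.edgeFinset.card : ℝ) / specRad G ≤ randic G := by
  set a : G.Dart → ℝ := fun d => √((G.degree d.fst : ℝ) * G.degree d.snd)
  set D : ℝ := (Fintype.card G.Dart : ℝ)
  have ha : ∀ d, 0 < a d := fun d => Real.sqrt_pos.2 <| mul_pos
    (Nat.cast_pos.2 d.adj.degree_pos_left) (Nat.cast_pos.2 d.adj.degree_pos_right)
  have hR : 2 * randic G = ∑ d, (a d)⁻¹ := two_mul_randic_eq_sum_darts G
  have hR0 : 0 ≤ randic G := by
    linarith [sum_nonneg fun d (_ : d ∈ univ) => (inv_pos.2 (ha d)).le]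
  have hD : D = 2 * (#G.edgeFinset : ℝ) := by
    simp only [D]; exact_mod_cast G.dart_card_eq_twice_card_edges
  rcases le_or_gt (specRad G) 0 with hμ | hμ
  · exact (div_nonpos_of_nonneg_of_nonpos (Nat.cast_nonneg _) hμ).trans hR0
  have hsq : D ^ 2 ≤ D * (2 * (randic G * specRad G)) :=
    calc D ^ 2 ≤ (∑ d, a d) * ∑ d, (a d)⁻¹ := by
          simpa [D] using card_sq_le_sum_mul_sum_inv univ fun d _ => ha d
      _ ≤ specRad G * D * ∑ d, (a d)⁻¹ := by
          gcongr
          exact sum_darts_sqrt_degree_mul_le_specRad_mul G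
      _ = D * (2 * (randic G * specRad G)) := by rw [← hR]; ring
  rw [div_le_iff₀ hμ]
  nlinarith [mul_nonneg hR0 hμ.le]
end

section
/- For any graph G with m edges, √(s⁺) ≤ (√(8m+1) − 1)/2, where s⁺ is the sum of squares of the positive adjacency eigenvalues of G. -/
open Finset

variable {V : Type*} [Fintype V] [DecidableEq V]

/-!
Write `A` for the adjacency matrix, `⟪X, Y⟫ = vec X ⬝ᵥ vec Y` for the Frobenius inner product and
fix a proper colouring with `k = χ(G)` colours. The positive part `B = A⁺` is a Gram matrix with
`⟪B, A⟫ = ⟪B, B⟫ = s⁺`. Let `D` be its pinching to the diagonal blocks of the colouring: for Gram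
matrices `‖B‖² ≤ k ‖D‖²`, and `A` vanishes on these blocks, so Cauchy–Schwarz applied to
`⟪B - D, A⟫ = s⁺` gives the Ando–Lin bound `k s⁺ ≤ (k - 1) ‖A‖² = 2m (k - 1)`. A colouring with
`χ(G)` colours has an edge between any two colour classes, so `k (k - 1) ≤ 2m`. Together these
give `k √s⁺ ≤ 2m`, hence `s⁺ + √s⁺ ≤ 2m`, which is the claim.
-/

open Matrix

section RealInequalities

variable {ι κ : Type*} [Fintype ι] [Fintype κ]

lemma posPart_mul_eq_posPart_sq (x : ℝ) : x⁺ * x = x⁺ ^ 2 := by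
  rcases le_total 0 x with h | h
  · rw [posPart_eq_self.2 h, sq]
  · rw [posPart_eq_zero.2 h]; ring

lemma dotProduct_sq_le (v w : ι → ℝ) : (v ⬝ᵥ w) ^ 2 ≤ (v ⬝ᵥ v) * (w ⬝ᵥ w) := by
  simpa only [dotProduct, sq] using sum_mul_sq_le_sq_mul_sq univ v w

lemma sum_dotProduct_sum_le (y : κ → ι → ℝ) :
    (∑ s, y s) ⬝ᵥ (∑ s, y s) ≤ Fintype.card κ * ∑ s, y s ⬝ᵥ y s := by
  simp only [dotProduct, Finset.sum_apply, ← sq]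
  rw [Finset.sum_comm, Finset.mul_sum]
  exact sum_le_sum fun i _ => sq_sum_le_card_mul_sum_sq

end RealInequalities

namespace Matrix

variable {m n κ : Type*} [Fintype m] [Fintype n] [DecidableEq κ]

lemma vec_transpose_mul_self_dotProduct_self (Y : Matrix m n ℝ) :
    vec (Yᵀ * Y) ⬝ᵥ vec (Yᵀ * Y) = vec (Y * Yᵀ) ⬝ᵥ vec (Y * Yᵀ) := by
  simp only [vec_dotProduct_vec, transpose_mul, transpose_transpose, ← Matrix.mul_assoc]
  rw [trace_mul_comm]
  simp only [Matrix.mul_assoc]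

def pinching {α : Type*} [Zero α] (c : n → κ) (B : Matrix n n α) : Matrix n n α :=
  of fun u v => if c u = c v then B u v else 0

lemma vec_pinching_dotProduct_of_eq_zero (c : n → κ) (B : Matrix n n ℝ) {A : Matrix n n ℝ}
    (hA : ∀ u v, c u = c v → A u v = 0) : vec (pinching c B) ⬝ᵥ vec A = 0 := by
  refine sum_eq_zero fun p _ => ?_
  by_cases h : c p.2 = c p.1
  · simp [vec, pinching, hA _ _ h]
  · simp [vec, pinching, h]

lemma vec_dotProduct_vec_pinching (c : n → κ) (B : Matrix n n ℝ) :
    vec B ⬝ᵥ vec (pinching c B) = vec (pinching c B) ⬝ᵥ vec (pinching c B) := by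
  refine sum_congr rfl fun p _ => ?_
  by_cases h : c p.2 = c p.1 <;> simp [vec, pinching, h]

/-- With `P s` the projection onto the colour class `s` and `Y s = X * P s`, we have
`X * Xᵀ = ∑ s, Y s * (Y s)ᵀ`, and `‖Yᵀ Y‖ = ‖Y Yᵀ‖` turns each term into a diagonal block of
`Xᵀ * X`; what is left is `‖∑ s, y s‖² ≤ k ∑ s, ‖y s‖²`. -/
lemma vec_transpose_mul_self_dotProduct_self_le [DecidableEq n] [Fintype κ] (X : Matrix m n ℝ)
    (c : n → κ) :
    vec (Xᵀ * X) ⬝ᵥ vec (Xᵀ * X) ≤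
      Fintype.card κ * (vec (pinching c (Xᵀ * X)) ⬝ᵥ vec (pinching c (Xᵀ * X))) := by
  let P : κ → Matrix n n ℝ := fun s => diagonal fun v => if c v = s then 1 else 0
  let Y : κ → Matrix m n ℝ := fun s => X * P s
  have hPt : ∀ s, (P s)ᵀ = P s := fun s => diagonal_transpose _
  have hP : ∑ s, P s * P s = 1 := by
    simp only [P, diagonal_mul_diagonal]
    ext u v
    by_cases h : u = v <;> simp [Matrix.sum_apply, one_apply, h]
  have hsum : ∑ s, Y s * (Y s)ᵀ = X * Xᵀ := by
    simp only [Y, transpose_mul, hPt, Matrix.mul_assoc]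
    rw [← Matrix.mul_sum]
    simp only [← Matrix.mul_assoc, ← Matrix.sum_mul, hP, Matrix.mul_one]
  have hblock : ∀ s, (Y s)ᵀ * Y s = P s * (Xᵀ * X) * P s := by
    intro s
    simp only [Y, transpose_mul, hPt, Matrix.mul_assoc]
  have hpinch : ∑ s, vec (P s * (Xᵀ * X) * P s) ⬝ᵥ vec (P s * (Xᵀ * X) * P s) =
      vec (pinching c (Xᵀ * X)) ⬝ᵥ vec (pinching c (Xᵀ * X)) := by
    simp only [P, dotProduct, vec, diagonal_mul, mul_diagonal, pinching]
    rw [Finset.sum_comm]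
    refine sum_congr rfl fun p _ => ?_
    by_cases h : c p.2 = c p.1 <;> simp [h]
  calc vec (Xᵀ * X) ⬝ᵥ vec (Xᵀ * X) = vec (∑ s, Y s * (Y s)ᵀ) ⬝ᵥ vec (∑ s, Y s * (Y s)ᵀ) := by
        rw [hsum, vec_transpose_mul_self_dotProduct_self]
    _ ≤ Fintype.card κ * ∑ s, vec (Y s * (Y s)ᵀ) ⬝ᵥ vec (Y s * (Y s)ᵀ) := by
        rw [vec_sum]; exact sum_dotProduct_sum_le _
    _ = _ := by
        simp only [← vec_transpose_mul_self_dotProduct_self, hblock, hpinch]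

lemma card_mul_sq_le_of_forall_eq_zero [DecidableEq n] [Fintype κ] (X : Matrix n n ℝ)
    {A : Matrix n n ℝ} (c : n → κ) (hA : ∀ u v, c u = c v → A u v = 0) :
    Fintype.card κ * (vec (Xᵀ * X) ⬝ᵥ vec A) ^ 2 ≤
      (Fintype.card κ - 1) * (vec (Xᵀ * X) ⬝ᵥ vec (Xᵀ * X)) * (vec A ⬝ᵥ vec A) := by
  set B := Xᵀ * X
  set D := pinching c B
  have hBD : vec B ⬝ᵥ vec D = vec D ⬝ᵥ vec D := vec_dotProduct_vec_pinching c B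
  have hDA : vec D ⬝ᵥ vec A = 0 := vec_pinching_dotProduct_of_eq_zero c B hA
  have hpinch : vec B ⬝ᵥ vec B ≤ Fintype.card κ * (vec D ⬝ᵥ vec D) :=
    vec_transpose_mul_self_dotProduct_self_le X c
  have hCS := dotProduct_sq_le (vec B - vec D) (vec A)
  rw [sub_dotProduct, hDA, sub_zero, sub_dotProduct, dotProduct_sub, dotProduct_sub,
    dotProduct_comm (vec D) (vec B), hBD, sub_self, sub_zero] at hCS
  have hA0 : 0 ≤ vec A ⬝ᵥ vec A := dotProduct_self_star_nonneg _
  have hk0 : (0 : ℝ) ≤ Fintype.card κ := Nat.cast_nonneg _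
  nlinarith [mul_le_mul_of_nonneg_left hCS hk0, mul_le_mul_of_nonneg_right hpinch hA0]

end Matrix

namespace Matrix.IsHermitian

variable {n : Type*} [Fintype n] [DecidableEq n] {A : Matrix n n ℝ} (hA : A.IsHermitian)

lemma cfc_transpose_mul_cfc (f g : ℝ → ℝ) : (hA.cfc f)ᵀ * hA.cfc g = hA.cfc (f * g) := by
  rw [← conjTranspose_eq_transpose_of_trivial, ← star_eq_conjTranspose]
  simp only [IsHermitian.cfc, ← map_star, ← map_mul, star_eq_conjTranspose, diagonal_conjTranspose,
    diagonal_mul_diagonal]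
  rfl

lemma trace_cfc (f : ℝ → ℝ) : trace (hA.cfc f) = ∑ i, f (hA.eigenvalues i) := by
  rw [IsHermitian.cfc, Unitary.conjStarAlgAut_apply, trace_mul_cycle, Unitary.coe_star_mul_self,
    Matrix.one_mul, trace_diagonal]
  rfl

lemma vec_cfc_dotProduct_vec_cfc (f g : ℝ → ℝ) :
    vec (hA.cfc f) ⬝ᵥ vec (hA.cfc g) = ∑ i, f (hA.eigenvalues i) * g (hA.eigenvalues i) := by
  rw [vec_dotProduct_vec, cfc_transpose_mul_cfc, trace_cfc]
  rfl

lemma cfc_id : hA.cfc id = A := (hA.cfc_eq id).symm.trans (_root_.cfc_id ℝ A)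

end Matrix.IsHermitian

namespace Matrix

variable {n κ : Type*} [Fintype n] [DecidableEq n] [Fintype κ] [DecidableEq κ] [Nonempty κ]

theorem card_mul_sum_posPart_sq_le {A : Matrix n n ℝ} (hA : A.IsHermitian) (c : n → κ)
    (hc : ∀ u v, c u = c v → A u v = 0) :
    Fintype.card κ * ∑ i, (hA.eigenvalues i)⁺ ^ 2 ≤ (Fintype.card κ - 1) * (vec A ⬝ᵥ vec A) := by
  set X := hA.cfc fun x => √x⁺
  have hX : Xᵀ * X = hA.cfc fun x => x⁺ := by
    rw [hA.cfc_transpose_mul_cfc]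
    congr 1
    funext x
    exact Real.mul_self_sqrt (posPart_nonneg x)
  have hXA : vec (Xᵀ * X) ⬝ᵥ vec A = ∑ i, (hA.eigenvalues i)⁺ ^ 2 := by
    have h := hA.vec_cfc_dotProduct_vec_cfc (fun x => x⁺) id
    rw [hA.cfc_id] at h
    rw [hX, h]
    exact sum_congr rfl fun i _ => posPart_mul_eq_posPart_sq _
  have hXX : vec (Xᵀ * X) ⬝ᵥ vec (Xᵀ * X) = ∑ i, (hA.eigenvalues i)⁺ ^ 2 := by
    rw [hX, hA.vec_cfc_dotProduct_vec_cfc]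
    exact sum_congr rfl fun i _ => (sq _).symm
  have h := card_mul_sq_le_of_forall_eq_zero X c hc
  rw [hXA, hXX] at h
  have hk : (1 : ℝ) ≤ Fintype.card κ := Nat.one_le_cast.2 Fintype.card_pos
  have hA0 : 0 ≤ vec A ⬝ᵥ vec A := dotProduct_self_star_nonneg _
  rcases (sum_nonneg fun i _ => sq_nonneg (hA.eigenvalues i)⁺ : (0 : ℝ) ≤ _).eq_or_lt
    with hβ | hβ
  · rw [← hβ]; nlinarith
  · nlinarith

end Matrix

namespace SimpleGraph

variable {W : Type*}

lemma vec_adjMatrix_dotProduct_self [Fintype W] (G : SimpleGraph W) [DecidableRel G.Adj] :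
    vec (G.adjMatrix ℝ) ⬝ᵥ vec (G.adjMatrix ℝ) = 2 * #G.edgeFinset := by
  classical
  rw [vec_dotProduct_vec, transpose_adjMatrix, trace]
  simp only [diag_apply, adjMatrix_mul_self_apply_self]
  exact_mod_cast sum_degrees_eq_twice_card_edges G

namespace Coloring

variable {α : Type*} {G : SimpleGraph W}

lemma adjMatrix_apply_eq_zero [DecidableRel G.Adj] (C : G.Coloring α) {u v : W}
    (h : C u = C v) : G.adjMatrix ℝ u v = 0 := by
  rw [adjMatrix_apply, if_neg fun huv => C.valid huv h]

lemma exists_adj_of_card_le_chromaticNumber [Fintype α] (C : G.Coloring α)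
    (hC : Fintype.card α ≤ G.chromaticNumber) {i j : α} (hij : i ≠ j) :
    ∃ u v, G.Adj u v ∧ C u = i ∧ C v = j := by
  classical
  by_contra! hno
  let C' : G.Coloring α := Coloring.mk (fun v => if C v = i then j else C v) fun {u v} huv => by
    have := C.valid huv
    by_cases hu : C u = i <;> by_cases hv : C v = i <;> simp only [hu, hv, if_true, if_false]
    · exact absurd (hu.trans hv.symm) this
    · exact fun h => hno u v huv hu h.symm
    · exact fun h => hno v u huv.symm hv h
    · exact this
  obtain ⟨v, hv⟩ := card_le_chromaticNumber_iff_forall_surjective.1 hC C' i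
  change (if C v = i then j else C v) = i at hv
  split_ifs at hv with h
  exacts [hij hv.symm, h hv]

lemma card_mul_pred_le_of_card_le_chromaticNumber [Fintype α] [Fintype W] [DecidableRel G.Adj]
    (C : G.Coloring α) (hC : Fintype.card α ≤ G.chromaticNumber) :
    Fintype.card α * (Fintype.card α - 1) ≤ 2 * #G.edgeFinset := by
  classical
  have hsurj : Set.SurjOn (fun d : G.Dart => (C d.fst, C d.snd)) (univ : Finset G.Dart)
      (univ : Finset α).offDiag := by
    rintro ⟨i, j⟩ hij
    obtain ⟨u, v, huv, rfl, rfl⟩ :=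
      C.exists_adj_of_card_le_chromaticNumber hC (mem_offDiag.1 hij).2.2
    exact ⟨⟨(u, v), huv⟩, mem_univ _, rfl⟩
  have := card_le_card_of_surjOn _ hsurj
  rw [offDiag_card, card_univ, card_univ, dart_card_eq_twice_card_edges] at this
  rwa [Nat.mul_sub_one]

end Coloring

end SimpleGraph

lemma sPlus_eq_sum_posPart_sq (G : SimpleGraph V) [DecidableRel G.Adj] :
    sPlus G = ∑ i, (adjEigenvalues G i)⁺ ^ 2 := by
  refine sum_congr rfl fun i _ => ?_
  split_ifs with h
  · rw [posPart_eq_self.2 h.le]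
  · rw [posPart_eq_zero.2 (not_lt.1 h), sq, zero_mul]

lemma sqrt_le_of_card_mul_le {k β m : ℝ} (hk : 1 ≤ k) (hβ : 0 ≤ β)
    (hβm : k * β ≤ (k - 1) * (2 * m)) (hkm : k * (k - 1) ≤ 2 * m) :
    √β ≤ (√(8 * m + 1) - 1) / 2 := by
  set t := √β
  have ht : t ^ 2 = β := Real.sq_sqrt hβ
  have hm : 0 ≤ m := by nlinarith
  have hkt : k * t ≤ 2 * m := by
    refine (pow_le_pow_iff_left₀ (by positivity) (by positivity) two_ne_zero).1 ?_
    nlinarith [mul_le_mul_of_nonneg_left hβm (by positivity : 0 ≤ k),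
      mul_le_mul_of_nonneg_right hkm (by positivity : 0 ≤ 2 * m)]
  have htm : t ^ 2 + t ≤ 2 * m := by nlinarith
  have h2t : 2 * t + 1 ≤ √(8 * m + 1) :=
    (Real.le_sqrt (by positivity) (by positivity)).2 (by nlinarith)
  linarith

theorem sqrt_sPlus_le (G : SimpleGraph V) [DecidableRel G.Adj] :
    Real.sqrt (sPlus G) ≤ (Real.sqrt (8 * G.edgeFinset.card + 1) - 1) / 2 := by
  rcases isEmpty_or_nonempty V with hV | hV
  · exact sqrt_le_of_card_mul_le le_rfl (by simp [sPlus]) (by simp [sPlus]) (by simp)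
  have hA : (G.adjMatrix ℝ).IsHermitian := isHermitian_iff_isSymm.2 G.isSymm_adjMatrix
  set k := G.chromaticNumber.toNat
  obtain ⟨C⟩ : G.Colorable k := G.colorable_chromaticNumber_of_fintype
  have : Nonempty (Fin k) := ⟨C (Classical.arbitrary V)⟩
  have hk : 0 < k := Fin.pos_iff_nonempty.2 this
  have hAndoLin := card_mul_sum_posPart_sq_le hA C fun _ _ => C.adjMatrix_apply_eq_zero
  have hedges := C.card_mul_pred_le_of_card_le_chromaticNumber <| by
    simpa using ENat.natCast_toNat_le_self G.chromaticNumber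
  rw [Fintype.card_fin, G.vec_adjMatrix_dotProduct_self] at hAndoLin
  rw [Fintype.card_fin] at hedges
  rw [sPlus_eq_sum_posPart_sq]
  refine sqrt_le_of_card_mul_le (Nat.one_le_cast.2 hk) (sum_nonneg fun _ _ => sq_nonneg _)
    hAndoLin ?_
  rw [← Nat.cast_pred hk]
  exact_mod_cast hedges
end
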